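/- Let μ ∈ ℝ, let v > 0, let ψ > 1 with ψ·v ≥ 1, and let 0 < α < 1. Then the Kullback–Leibler divergence from the Gaussian N(μ, ψ·v) to the compact prior-variance Gaussian N(μ, α²) is strictly greater than the Kullback–Leibler divergence from N(μ, ψ·v) to the unit-variance Gaussian N(μ, 1): D_KL(N(μ, ψ·v) ‖ N(μ, α²)) > D_KL(N(μ, ψ·v) ‖ N(μ, 1)). -/

import Mathlib

open MeasureTheory ProbabilityTheory
open scoped ENNReal NNReal

open Classical

/-- Kullback–Leibler divergence between two measures (Mathlib's `InformationTheory.klDiv`). -/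
noncomputable def klDiv {α : Type*} [MeasurableSpace α] (μ ν : Measure α) : ℝ≥0∞ :=
  if μ ≪ ν ∧ Integrable (llr μ ν) μ then ENNReal.ofReal (∫ x, llr μ ν x ∂μ) else ⊤

section Aux
open Real Filter Asymptotics

lemma integrable_sq_mul_exp_neg_mul_sq {b : ℝ} (hb : 0 < b) :
    Integrable fun x : ℝ => x ^ 2 * Real.exp (-b * x ^ 2) := by
  have := integrable_rpow_mul_exp_neg_mul_sq hb (by norm_num : (-1 : ℝ) < 2)
  simpa [Real.rpow_natCast] using this

lemma tendsto_mul_exp_neg_mul_sq_atTop {b : ℝ} (hb : 0 < b) :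
    Tendsto (fun x : ℝ => x * Real.exp (-b * x ^ 2)) atTop (nhds 0) := by
  have h := rpow_mul_exp_neg_mul_sq_isLittleO_exp_neg hb 1
  have h2 : Tendsto (fun x : ℝ => Real.exp (-(1/2) * x)) atTop (nhds 0) :=
    Real.tendsto_exp_atBot.comp (tendsto_id.const_mul_atTop_of_neg (by norm_num))
  have := h.isBigO.trans_tendsto h2
  refine this.congr' ?_
  filter_upwards [eventually_gt_atTop (0:ℝ)] with x hx
  rw [Real.rpow_one]

lemma integral_sq_mul_exp_neg_mul_sq {b : ℝ} (hb : 0 < b) :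
    ∫ x : ℝ, x ^ 2 * Real.exp (-b * x ^ 2) = (2 * b)⁻¹ * Real.sqrt (π / b) := by
  set F : ℝ → ℝ := fun x => -(2 * b)⁻¹ * (x * Real.exp (-b * x ^ 2)) with hF
  have hb' : (2 : ℝ) * b ≠ 0 := by positivity
  have hderiv : ∀ x : ℝ, HasDerivAt F
      (x ^ 2 * Real.exp (-b * x ^ 2) - (2 * b)⁻¹ * Real.exp (-b * x ^ 2)) x := by
    intro x
    have h1 : HasDerivAt (fun x : ℝ => -b * x ^ 2) (-b * (2 * x)) x := by
      simpa using (hasDerivAt_pow 2 x).const_mul (-b)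
    have h2 : HasDerivAt (fun x : ℝ => Real.exp (-b * x ^ 2))
        (Real.exp (-b * x ^ 2) * (-b * (2 * x))) x := h1.exp
    have h3 : HasDerivAt (fun x : ℝ => x * Real.exp (-b * x ^ 2))
        (1 * Real.exp (-b * x ^ 2) + x * (Real.exp (-b * x ^ 2) * (-b * (2 * x)))) x :=
      (hasDerivAt_id x).mul h2
    have h4 := h3.const_mul (-(2 * b)⁻¹)
    refine h4.congr_deriv ?_
    have hinv : (2 * b)⁻¹ * (2 * b) = 1 := inv_mul_cancel₀ hb'
    linear_combination (x ^ 2 * Real.exp (-b * x ^ 2)) * hinv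
  have hint : Integrable fun x : ℝ =>
      x ^ 2 * Real.exp (-b * x ^ 2) - (2 * b)⁻¹ * Real.exp (-b * x ^ 2) :=
    (integrable_sq_mul_exp_neg_mul_sq hb).sub ((integrable_exp_neg_mul_sq hb).const_mul _)
  have htop : Tendsto F atTop (nhds 0) := by
    have := (tendsto_mul_exp_neg_mul_sq_atTop hb).const_mul (-(2 * b)⁻¹)
    rw [mul_zero] at this
    exact this
  have hbot : Tendsto F atBot (nhds 0) := by
    have h1 : Tendsto (fun x : ℝ => F (-x)) atTop (nhds 0) := by
      have := ((tendsto_mul_exp_neg_mul_sq_atTop hb).const_mul ((2 * b)⁻¹))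
      rw [mul_zero] at this
      refine this.congr fun x => ?_
      simp only [hF]
      ring_nf
    have h2 := h1.comp tendsto_neg_atBot_atTop
    refine h2.congr fun x => ?_
    simp [Function.comp]
  have h0 : (∫ x : ℝ, (x ^ 2 * Real.exp (-b * x ^ 2) - (2 * b)⁻¹ * Real.exp (-b * x ^ 2))) =
      0 - 0 := integral_of_hasDerivAt_of_tendsto hderiv hint hbot htop
  rw [integral_sub (integrable_sq_mul_exp_neg_mul_sq hb)
      ((integrable_exp_neg_mul_sq hb).const_mul _), sub_zero] at h0
  rw [sub_eq_zero] at h0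
  rw [h0, integral_const_mul, integral_gaussian]

lemma gaussianReal_eq_withDensity (m : ℝ) {v : ℝ≥0} (hv : v ≠ 0) :
    gaussianReal m v
      = (volume : Measure ℝ).withDensity
          (fun x => ((gaussianPDFReal m v x).toNNReal : ℝ≥0∞)) := by
  rw [gaussianReal_of_var_ne_zero _ hv]
  rfl

lemma integral_gaussianReal (m : ℝ) {v : ℝ≥0} (hv : v ≠ 0) (f : ℝ → ℝ) :
    ∫ x, f x ∂(gaussianReal m v) = ∫ x, gaussianPDFReal m v x * f x := by
  rw [gaussianReal_eq_withDensity m hv,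
    integral_withDensity_eq_integral_smul
      ((measurable_gaussianPDFReal m v).real_toNNReal) f]
  refine integral_congr_ae (Filter.Eventually.of_forall fun x => ?_)
  simp [NNReal.smul_def, Real.coe_toNNReal _ (gaussianPDFReal_nonneg m v x)]

lemma integrable_gaussianReal_iff (m : ℝ) {v : ℝ≥0} (hv : v ≠ 0) (f : ℝ → ℝ) :
    Integrable f (gaussianReal m v) ↔
      Integrable (fun x => gaussianPDFReal m v x * f x) := by
  rw [gaussianReal_eq_withDensity m hv,
    integrable_withDensity_iff_integrable_smul
      ((measurable_gaussianPDFReal m v).real_toNNReal)]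
  constructor <;> intro h <;> refine h.congr (Filter.Eventually.of_forall fun x => ?_) <;>
    simp [NNReal.smul_def, Real.coe_toNNReal _ (gaussianPDFReal_nonneg m v x)]

lemma pdf_mul_sq_eq (m : ℝ) (v : ℝ≥0) (x : ℝ) :
    gaussianPDFReal m v x * (x - m) ^ 2
      = (√(2 * π * v))⁻¹ * ((x - m) ^ 2 * Real.exp (-(2 * (v:ℝ))⁻¹ * (x - m) ^ 2)) := by
  rw [gaussianPDFReal]
  have : -(x - m) ^ 2 / (2 * (v:ℝ)) = -(2 * (v:ℝ))⁻¹ * (x - m) ^ 2 := by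
    field_simp
  rw [this]
  ring

lemma integrable_sq_gaussianReal (m : ℝ) {v : ℝ≥0} (hv : v ≠ 0) :
    Integrable (fun x => (x - m) ^ 2) (gaussianReal m v) := by
  rw [integrable_gaussianReal_iff m hv]
  have hb : 0 < (2 * (v:ℝ))⁻¹ := by positivity
  have h : Integrable (fun y : ℝ =>
      (√(2 * π * v))⁻¹ * (y ^ 2 * Real.exp (-(2 * (v:ℝ))⁻¹ * y ^ 2))) :=
    (integrable_sq_mul_exp_neg_mul_sq hb).const_mul _
  have h2 := h.comp_sub_right m
  refine h2.congr (Filter.Eventually.of_forall fun x => ?_)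
  simp only []
  rw [pdf_mul_sq_eq]

lemma integral_sq_gaussianReal (m : ℝ) {v : ℝ≥0} (hv : v ≠ 0) :
    ∫ x, (x - m) ^ 2 ∂(gaussianReal m v) = (v : ℝ) := by
  rw [integral_gaussianReal m hv]
  have hb : 0 < (2 * (v:ℝ))⁻¹ := by positivity
  have hv' : 0 < (v:ℝ) := lt_of_le_of_ne (by positivity) (by exact_mod_cast (Ne.symm hv))
  calc ∫ x, gaussianPDFReal m v x * (x - m) ^ 2
      = ∫ x, (√(2 * π * v))⁻¹ *
          ((x - m) ^ 2 * Real.exp (-(2 * (v:ℝ))⁻¹ * (x - m) ^ 2)) := by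
        refine integral_congr_ae (Filter.Eventually.of_forall fun x => ?_)
        simp only []
        rw [pdf_mul_sq_eq]
    _ = ∫ y, (√(2 * π * v))⁻¹ * (y ^ 2 * Real.exp (-(2 * (v:ℝ))⁻¹ * y ^ 2)) := by
        exact (integral_sub_right_eq_self
          (fun y => (√(2 * π * v))⁻¹ * (y ^ 2 * Real.exp (-(2 * (v:ℝ))⁻¹ * y ^ 2))) m)
    _ = (√(2 * π * v))⁻¹ * ((2 * (2 * (v:ℝ))⁻¹)⁻¹ * √(π / (2 * (v:ℝ))⁻¹)) := by
        rw [integral_const_mul, integral_sq_mul_exp_neg_mul_sq hb]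
    _ = (v : ℝ) := by
        have h1 : π / (2 * (v:ℝ))⁻¹ = 2 * π * v := by
          field_simp
        have h2 : (2 * (2 * (v:ℝ))⁻¹)⁻¹ = v := by
          rw [mul_inv, inv_inv]
          field_simp
        rw [h1, h2]
        have h3 : (0:ℝ) < 2 * π * v := by positivity
        field_simp [Real.sqrt_ne_zero'.mpr h3]

lemma log_gaussianPDFReal (m : ℝ) {v : ℝ≥0} (hv : v ≠ 0) (x : ℝ) :
    Real.log (gaussianPDFReal m v x)
      = -Real.log (√(2 * π * v)) - (x - m) ^ 2 / (2 * v) := by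
  have h3 : (0:ℝ) < 2 * π * v := by
    have : (0:ℝ) < (v:ℝ) := lt_of_le_of_ne (by positivity) (by exact_mod_cast (Ne.symm hv))
    positivity
  rw [gaussianPDFReal, Real.log_mul (by positivity) (Real.exp_ne_zero _), Real.log_inv,
    Real.log_exp, neg_div]
  ring

lemma llr_gaussianReal (m : ℝ) {w u : ℝ≥0} (hw : w ≠ 0) (hu : u ≠ 0) :
    llr (gaussianReal m w) (gaussianReal m u)
      =ᵐ[gaussianReal m w]
        fun x => Real.log (gaussianPDFReal m w x) - Real.log (gaussianPDFReal m u x) := by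
  have h1 : (gaussianReal m w).rnDeriv (gaussianReal m u)
      =ᵐ[volume] fun x => (gaussianPDF m u x)⁻¹ * (gaussianReal m w).rnDeriv volume x := by
    rw [gaussianReal_of_var_ne_zero m hu]
    exact Measure.rnDeriv_withDensity_right (gaussianReal m w) volume
      (measurable_gaussianPDF m u).aemeasurable
      (Filter.Eventually.of_forall fun x => (gaussianPDF_pos m hu x).ne')
      (Filter.Eventually.of_forall fun x => ENNReal.ofReal_ne_top)
  have h2 := rnDeriv_gaussianReal m w
  have h3 : (gaussianReal m w).rnDeriv (gaussianReal m u)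
      =ᵐ[volume] fun x => (gaussianPDF m u x)⁻¹ * gaussianPDF m w x := by
    filter_upwards [h1, h2] with x hx1 hx2
    rw [hx1, hx2]
  have h4 := (gaussianReal_absolutelyContinuous m hw).ae_eq h3
  filter_upwards [h4] with x hx
  rw [llr, hx]
  rw [gaussianPDF, gaussianPDF, ENNReal.toReal_mul, ENNReal.toReal_inv,
    ENNReal.toReal_ofReal (gaussianPDFReal_nonneg m u x),
    ENNReal.toReal_ofReal (gaussianPDFReal_nonneg m w x),
    Real.log_mul (inv_ne_zero (gaussianPDFReal_pos m u x hu).ne')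
      (gaussianPDFReal_pos m w x hw).ne', Real.log_inv]
  ring

lemma klDiv_gaussianReal (m : ℝ) {w u : ℝ≥0} (hw : w ≠ 0) (hu : u ≠ 0) :
    klDiv (gaussianReal m w) (gaussianReal m u)
      = ENNReal.ofReal ((Real.log ((u : ℝ) / w) + (w : ℝ) / u - 1) / 2) := by
  have hw' : (0:ℝ) < (w:ℝ) := lt_of_le_of_ne (by positivity) (by exact_mod_cast (Ne.symm hw))
  have hu' : (0:ℝ) < (u:ℝ) := lt_of_le_of_ne (by positivity) (by exact_mod_cast (Ne.symm hu))
  set P := gaussianReal m w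
  have hac : P ≪ gaussianReal m u :=
    (gaussianReal_absolutelyContinuous m hw).trans (gaussianReal_absolutelyContinuous' m hu)
  set g : ℝ → ℝ := fun x =>
    (Real.log (√(2 * π * u)) - Real.log (√(2 * π * w)))
      + ((2 * (u:ℝ))⁻¹ - (2 * (w:ℝ))⁻¹) * (x - m) ^ 2 with hg
  have hllr : llr P (gaussianReal m u) =ᵐ[P] g := by
    filter_upwards [llr_gaussianReal m hw hu] with x hx
    rw [hx, log_gaussianPDFReal m hw, log_gaussianPDFReal m hu, hg]
    have h1 : (x - m) ^ 2 / (2 * (w:ℝ)) = (2 * (w:ℝ))⁻¹ * (x - m) ^ 2 := by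
      rw [div_eq_mul_inv]; ring
    have h2 : (x - m) ^ 2 / (2 * (u:ℝ)) = (2 * (u:ℝ))⁻¹ * (x - m) ^ 2 := by
      rw [div_eq_mul_inv]; ring
    rw [h1, h2]
    ring
  have hgint : Integrable g P := by
    exact (integrable_const _).add ((integrable_sq_gaussianReal m hw).const_mul _)
  have hint : Integrable (llr P (gaussianReal m u)) P := hgint.congr hllr.symm
  have hval : ∫ x, llr P (gaussianReal m u) x ∂P
      = (Real.log ((u : ℝ) / w) + (w : ℝ) / u - 1) / 2 := by
    rw [integral_congr_ae hllr, hg]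
    rw [integral_add (integrable_const _) ((integrable_sq_gaussianReal m hw).const_mul _),
      integral_const, integral_const_mul, integral_sq_gaussianReal m hw]
    have hπ : (0:ℝ) < π := Real.pi_pos
    have hlog : Real.log (√(2 * π * u)) - Real.log (√(2 * π * w))
        = Real.log ((u : ℝ) / w) / 2 := by
      rw [Real.log_sqrt (by positivity), Real.log_sqrt (by positivity),
        Real.log_div (by positivity) (by positivity),
        Real.log_mul (by positivity) hu'.ne', Real.log_mul (by positivity) hw'.ne']
      ring
    rw [hlog]
    have measreal : (gaussianReal m w).real Set.univ = 1 := by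
      simp [P, measure_univ]
    rw [measreal]
    field_simp
    ring
  rw [klDiv, if_pos ⟨hac, hint⟩, hval]


end Aux

/-- Enhanced separation: for `ψ > 1` with `ψ·v ≥ 1` and a compact prior standard deviation
`0 < α < 1`, the KL divergence from `N(μ, ψ·v)` to `N(μ, α²)` is strictly greater than the
KL divergence from `N(μ, ψ·v)` to `N(μ, 1)`. -/
theorem klDiv_compact_prior_gt (μ : ℝ) (v ψ α : ℝ≥0) (hv : 0 < v) (hψ : 1 < ψ)
    (hψv : 1 ≤ ψ * v) (hα0 : 0 < α) (hα1 : α < 1) :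
    klDiv (gaussianReal μ (ψ * v)) (gaussianReal μ (α ^ 2)) >
      klDiv (gaussianReal μ (ψ * v)) (gaussianReal μ 1) := by
  have hw : ψ * v ≠ 0 := by positivity
  have hu1 : (α ^ 2 : ℝ≥0) ≠ 0 := by positivity
  have hu2 : (1 : ℝ≥0) ≠ 0 := one_ne_zero
  rw [klDiv_gaussianReal μ hw hu1, klDiv_gaussianReal μ hw hu2]
  set W : ℝ := ((ψ * v : ℝ≥0) : ℝ) with hWdef
  set a : ℝ := (α : ℝ) with hadef
  have ha0 : (0:ℝ) < a := hα0
  have ha1 : a < 1 := hα1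
  have hW1 : (1:ℝ) ≤ W := by exact_mod_cast hψv
  have hW0 : (0:ℝ) < W := lt_of_lt_of_le one_pos hW1
  have hcast : ((α ^ 2 : ℝ≥0) : ℝ) = a ^ 2 := by push_cast; rfl
  rw [hcast, NNReal.coe_one]
  have hloga : 1 - 1/a ≤ Real.log a := by
    have h := Real.log_le_sub_one_of_pos (show (0:ℝ) < a⁻¹ by positivity)
    rw [Real.log_inv] at h
    have : 1/a = a⁻¹ := one_div a
    linarith
  have hlogW : Real.log W ≤ W - 1 := Real.log_le_sub_one_of_pos hW0
  have hlog2 : Real.log (a ^ 2 / W) = 2 * Real.log a - Real.log W := by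
    rw [Real.log_div (by positivity) hW0.ne', Real.log_pow]
    push_cast; ring
  have hlog1 : Real.log (1 / W) = -Real.log W := by
    rw [one_div, Real.log_inv]
  have hkey : (1/a - 1)^2 ≤ 2 * Real.log a + W * ((a^2)⁻¹ - 1) := by
    have h1 : (1:ℝ) * ((a^2)⁻¹ - 1) ≤ W * ((a^2)⁻¹ - 1) := by
      apply mul_le_mul_of_nonneg_right hW1
      have : (1:ℝ) < (a^2)⁻¹ := by
        rw [lt_inv_comm₀ one_pos (by positivity)]
        nlinarith
      linarith
    have h2 : (1/a - 1)^2 = 2 * (1 - 1/a) + ((a^2)⁻¹ - 1) := by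
      field_simp
      ring
    nlinarith
  have hBA : (Real.log (1 / W) + W / 1 - 1) / 2
      < (Real.log (a ^ 2 / W) + W / (a ^ 2) - 1) / 2 := by
    rw [hlog1, hlog2]
    have hne : a ≠ 1 := ne_of_lt ha1
    have hpos : (0:ℝ) < (1/a - 1)^2 := by
      have : 1/a - 1 ≠ 0 := by
        intro h
        apply hne
        field_simp at h
        linarith
      positivity
    have hdiv : W / a^2 = W * (a^2)⁻¹ := div_eq_mul_inv W _
    rw [hdiv]
    nlinarith
  have hA0 : 0 < (Real.log (a ^ 2 / W) + W / (a ^ 2) - 1) / 2 := by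
    have hB0 : 0 ≤ (Real.log (1 / W) + W / 1 - 1) / 2 := by
      rw [hlog1]
      nlinarith
    linarith
  exact (ENNReal.ofReal_lt_ofReal_iff hA0).mpr hBA
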